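/- arXiv:1307.2984 — 5 statements merged into one kernel-verified Lean document; each statement's English description precedes it below -/
import Mathlib

section
/- Under Assumption A1, for every λ ≥ 0 the following pair (x,y) maximizes the Lagrangian L(·,·,λ) over D: x_s = x_s^†(γ(s,λ)) for each session s, and y puts y_t = x_s on one tree t of each session s whose cost attains γ(s,λ) and y_t = 0 on all other trees. Moreover, the x-component of the maximizer is unique: every (x',y') maximizing L(·,·,λ) over D satisfies x' = x. -/
/-! With the tree costs `cost t = ∑ e, H e t * lam e` the Lagrangian reads
`∑ s, U s (x s) + ∑ e, lam e * c e - ∑ t, cost t * y t`. Every tree of session `s` costs at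
least `γ s lam` and `y ≥ 0`, so the routing term is at least `∑ s, γ s lam * x s`, with equality
when each session sends all its flow over one cheapest tree. Hence on `D` the Lagrangian is
bounded by the separable function `∑ s, (U s (x s) - γ s lam * x s) + ∑ e, lam e * c e`, which the
candidate attains and whose `s`-th summand `xdag s (γ s lam)` maximizes uniquely. -/

open Finset

theorem sum_mul_sub_sum_mul_eq {E T R : Type*} [Fintype E] [Fintype T] [CommRing R]
    (lam c : E → R) (H : E → T → R) (y : T → R) :
    ∑ e, lam e * (c e - ∑ t, H e t * y t) =
      ∑ e, lam e * c e - ∑ t, (∑ e, H e t * lam e) * y t := by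
  simp only [mul_sub, sum_sub_distrib, mul_sum, sum_mul]
  rw [sum_comm (f := fun e t => lam e * (H e t * y t))]
  congr 1
  exact sum_congr rfl fun _ _ => sum_congr rfl fun _ _ => by ring

section Routing

variable {S T R : Type*} [Fintype S] [Fintype T] [NonUnitalNonAssocSemiring R] {σ : T → S}

theorem sum_mul_eq_sum_comp_mul [DecidableEq S] {x : S → R} {y : T → R}
    (hxy : ∀ s, x s = ∑ t, if σ t = s then y t else 0) (g : S → R) :
    ∑ s, g s * x s = ∑ t, g (σ t) * y t := by
  simp only [hxy, mul_sum, ← sum_filter]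
  rw [← sum_fiberwise univ σ (fun t => g (σ t) * y t)]
  exact sum_congr rfl fun s _ => sum_congr rfl fun t ht => by rw [(mem_filter.1 ht).2]

theorem sum_mul_le_sum_cost_mul [DecidableEq S] {x : S → ℝ} {y : T → ℝ} {γ : S → ℝ}
    {cost : T → ℝ} (hy : ∀ t, 0 ≤ y t) (hxy : ∀ s, x s = ∑ t, if σ t = s then y t else 0)
    (hγ : ∀ t, γ (σ t) ≤ cost t) :
    ∑ s, γ s * x s ≤ ∑ t, cost t * y t := by
  rw [sum_mul_eq_sum_comp_mul hxy]
  exact sum_le_sum fun t _ => mul_le_mul_of_nonneg_right (hγ t) (hy t)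

variable [DecidableEq T] {τ : S → T}

theorem sum_ite_section_eq {M : Type*} [AddCommMonoid M] (hτ : ∀ s, σ (τ s) = s)
    (F : T → M) :
    ∑ t, (if τ (σ t) = t then F t else 0) = ∑ s, F (τ s) := by
  rw [← sum_filter]
  refine sum_nbij' σ τ (by simp) (by simp [hτ]) (fun t ht => (mem_filter.1 ht).2)
    (fun s _ => hτ s) fun t ht => ?_
  rw [(mem_filter.1 ht).2]

variable {x : S → R} {y : T → R}

theorem eq_sum_fiber_of_section [DecidableEq S] (hτ : ∀ s, σ (τ s) = s)
    (hy : ∀ t, y t = if τ (σ t) = t then x (σ t) else 0) (s : S) :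
    x s = ∑ t, if σ t = s then y t else 0 := by
  simp only [hy, ← ite_and, and_comm (a := σ _ = s)]
  simp only [ite_and]
  rw [sum_ite_section_eq hτ (fun t => if σ t = s then x (σ t) else 0)]
  simp [hτ]

theorem sum_mul_eq_sum_section_mul (hτ : ∀ s, σ (τ s) = s)
    (hy : ∀ t, y t = if τ (σ t) = t then x (σ t) else 0) (cost : T → R) :
    ∑ t, cost t * y t = ∑ s, cost (τ s) * x s := by
  simp only [hy, mul_ite, mul_zero]
  rw [sum_ite_section_eq hτ]
  simp only [hτ]

end Routing

theorem eq_of_sum_le_sum_of_forall_le {S α M : Type*} [Fintype S] [AddCommMonoid M]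
    [PartialOrder M] [IsOrderedCancelAddMonoid M] {f : S → α → M} {x z : S → α}
    (hle : ∀ s, f s (z s) ≤ f s (x s)) (hsum : ∑ s, f s (x s) ≤ ∑ s, f s (z s))
    (huniq : ∀ s, f s (z s) = f s (x s) → z s = x s) : z = x := by
  have hle' : ∀ s ∈ univ, f s (z s) ≤ f s (x s) := fun s _ => hle s
  have heq := (sum_eq_sum_iff_of_le hle').1 (le_antisymm (sum_le_sum hle') hsum)
  exact funext fun s => huniq s (heq s (mem_univ s))

theorem lagrangian_maximizer_general
    {S T E : Type} [Fintype S] [Fintype T] [Fintype E] [DecidableEq S] [DecidableEq T]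
    (σ : T → S)
    (H : E → T → ℝ)
    (c : E → ℝ)
    (m M : S → ℝ) (hm : ∀ s, 0 ≤ m s)
    (U : S → ℝ → ℝ)
    -- the domain D
    (D : Set ((S → ℝ) × (T → ℝ)))
    (hD : D = {p | (∀ t, 0 ≤ p.2 t) ∧
      (∀ s, p.1 s = ∑ t, if σ t = s then p.2 t else 0) ∧
      (∀ s, p.1 s ∈ Set.Icc (m s) (M s))})
    -- the Lagrangian
    (L : (S → ℝ) → (T → ℝ) → (E → ℝ) → ℝ)
    (hL : ∀ x y lam, L x y lam =
      ∑ s, U s (x s) + ∑ e, lam e * (c e - ∑ t, H e t * y t))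
    -- the minimum tree cost γ(s, λ)
    (γ : S → (E → ℝ) → ℝ)
    (hγ : ∀ s lam, IsLeast {w | ∃ t, σ t = s ∧ w = ∑ e, H e t * lam e} (γ s lam))
    -- x_s†(w) : the unique maximizer of x ↦ U_s(x) - w·x over [m_s, M_s]
    (xdag : S → ℝ → ℝ)
    (hxdag : ∀ (s : S) (w : ℝ), xdag s w ∈ Set.Icc (m s) (M s) ∧
      (∀ z ∈ Set.Icc (m s) (M s), U s z - w * z ≤ U s (xdag s w) - w * xdag s w) ∧
      (∀ z ∈ Set.Icc (m s) (M s),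
        U s z - w * z = U s (xdag s w) - w * xdag s w → z = xdag s w))
    -- the dual variable λ ≥ 0
    (lam : E → ℝ)
    -- τ selects, for each session s, one tree of s whose cost attains γ(s, λ)
    (τ : S → T)
    (hτ : ∀ s, σ (τ s) = s ∧ ∑ e, H e (τ s) * lam e = γ s lam)
    -- the candidate maximizer (x, y)
    (x : S → ℝ) (hx : ∀ s, x s = xdag s (γ s lam))
    (y : T → ℝ) (hy : ∀ t, y t = if τ (σ t) = t then x (σ t) else 0) :
    (x, y) ∈ D ∧
    (∀ p ∈ D, L p.1 p.2 lam ≤ L x y lam) ∧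
    (∀ p ∈ D, (∀ q ∈ D, L q.1 q.2 lam ≤ L p.1 p.2 lam) → p.1 = x) := by
  set C := ∑ e, lam e * c e
  let φ : S → ℝ → ℝ := fun s z => U s z - γ s lam * z
  have hφ_max : ∀ s, ∀ z ∈ Set.Icc (m s) (M s), φ s z ≤ φ s (x s) := fun s z hz => by
    simpa only [φ, hx] using (hxdag s (γ s lam)).2.1 z hz
  have hx_mem : ∀ s, x s ∈ Set.Icc (m s) (M s) := fun s => hx s ▸ (hxdag s (γ s lam)).1
  have hD_mem : ∀ p ∈ D, ∀ s, p.1 s ∈ Set.Icc (m s) (M s) := fun p hp => (hD ▸ hp).2.2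
  have hστ : ∀ s, σ (τ s) = s := fun s => (hτ s).1
  have hmem : (x, y) ∈ D := by
    refine hD ▸ ⟨fun t => ?_, eq_sum_fiber_of_section hστ hy, hx_mem⟩
    show 0 ≤ y t
    rw [hy]
    split_ifs <;> linarith [hm (σ t), (hx_mem (σ t)).1]
  have hL_le : ∀ p ∈ D, L p.1 p.2 lam ≤ ∑ s, φ s (p.1 s) + C := fun p hp => by
    have := sum_mul_le_sum_cost_mul (γ := fun s => γ s lam)
      (cost := fun t => ∑ e, H e t * lam e) (hD ▸ hp).1 (hD ▸ hp).2.1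
      fun t => (hγ (σ t) lam).2 ⟨t, rfl, rfl⟩
    simp only [hL, sum_mul_sub_sum_mul_eq, φ, sum_sub_distrib]
    linarith
  have hL_eq : L x y lam = ∑ s, φ s (x s) + C := by
    simp only [hL, sum_mul_sub_sum_mul_eq, sum_mul_eq_sum_section_mul hστ hy, φ, sum_sub_distrib,
      fun s => (hτ s).2]
    ring
  have hL_max : ∀ p ∈ D, L p.1 p.2 lam ≤ L x y lam := fun p hp => by
    rw [hL_eq]
    exact (hL_le p hp).trans (by gcongr with s; exact hφ_max s _ (hD_mem p hp s))
  refine ⟨hmem, hL_max, fun p hp hp_max => ?_⟩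
  refine eq_of_sum_le_sum_of_forall_le (fun s => hφ_max s _ (hD_mem p hp s))
    (by linarith [hp_max _ hmem, hL_le p hp]) fun s hs => ?_
  rw [hx] at hs ⊢
  exact (hxdag s (γ s lam)).2.2 _ (hD_mem p hp s) hs

/-- under A1, for every λ ≥ 0 the pair built from the min-cost trees and
x_s = x_s†(γ(s,λ)) maximizes the Lagrangian over D, and the x-component of any maximizer
is unique. -/
theorem lagrangian_maximizer
    {S T E : Type} [Fintype S] [Fintype T] [Fintype E]
    [Nonempty S] [Nonempty T] [Nonempty E] [DecidableEq S] [DecidableEq T]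
    (σ : T → S) (hσ : Function.Surjective σ)
    (H : E → T → ℝ) (hH : ∀ e t, H e t = 0 ∨ H e t = 1)
    (c : E → ℝ) (hc : ∀ e, 0 < c e)
    (m M : S → ℝ) (hm : ∀ s, 0 ≤ m s) (hmM : ∀ s, m s < M s)
    (U : S → ℝ → ℝ)
    -- Assumption A1
    (hUmono : ∀ s, MonotoneOn (U s) (Set.Icc (m s) (M s)))
    (hUconc : ∀ s, StrictConcaveOn ℝ (Set.Icc (m s) (M s)) (U s))
    (hUdiff : ∀ s, ContDiffOn ℝ 1 (U s) (Set.Icc (m s) (M s)))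
    -- the domain D
    (D : Set ((S → ℝ) × (T → ℝ)))
    (hD : D = {p | (∀ t, 0 ≤ p.2 t) ∧
      (∀ s, p.1 s = ∑ t, if σ t = s then p.2 t else 0) ∧
      (∀ s, p.1 s ∈ Set.Icc (m s) (M s))})
    -- the Lagrangian
    (L : (S → ℝ) → (T → ℝ) → (E → ℝ) → ℝ)
    (hL : ∀ x y lam, L x y lam =
      ∑ s, U s (x s) + ∑ e, lam e * (c e - ∑ t, H e t * y t))
    -- the minimum tree cost γ(s, λ)
    (γ : S → (E → ℝ) → ℝ)
    (hγ : ∀ s lam, IsLeast {w | ∃ t, σ t = s ∧ w = ∑ e, H e t * lam e} (γ s lam))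
    -- x_s†(w) : the unique maximizer of x ↦ U_s(x) - w·x over [m_s, M_s]
    (xdag : S → ℝ → ℝ)
    (hxdag : ∀ (s : S) (w : ℝ), xdag s w ∈ Set.Icc (m s) (M s) ∧
      (∀ z ∈ Set.Icc (m s) (M s), U s z - w * z ≤ U s (xdag s w) - w * xdag s w) ∧
      (∀ z ∈ Set.Icc (m s) (M s),
        U s z - w * z = U s (xdag s w) - w * xdag s w → z = xdag s w))
    -- the dual variable λ ≥ 0
    (lam : E → ℝ) (hlam : ∀ e, 0 ≤ lam e)
    -- τ selects, for each session s, one tree of s whose cost attains γ(s, λ)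
    (τ : S → T)
    (hτ : ∀ s, σ (τ s) = s ∧ ∑ e, H e (τ s) * lam e = γ s lam)
    -- the candidate maximizer (x, y)
    (x : S → ℝ) (hx : ∀ s, x s = xdag s (γ s lam))
    (y : T → ℝ) (hy : ∀ t, y t = if τ (σ t) = t then x (σ t) else 0) :
    (x, y) ∈ D ∧
    (∀ p ∈ D, L p.1 p.2 lam ≤ L x y lam) ∧
    (∀ p ∈ D, (∀ q ∈ D, L q.1 q.2 lam ≤ L p.1 p.2 lam) → p.1 = x) :=
  lagrangian_maximizer_general σ H c m M hm U D hD L hL γ hγ xdag hxdag lam τ hτ x hx y hy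
end

section
/- Under Assumptions A1 and A2, for every dual optimal λ* ∈ Λ*, the vector x defined by x_s = x_s^†(γ(s,λ*)) for each s is the unique optimal session-rate vector of the MP: there exists y ≥ 0 such that (x,y) is feasible for the MP with f(x,y) = f*, and every optimal solution (x',y') of the MP satisfies x' = x. -/
/-!
The master problem maximizes a concave `f` over a convex `D` under the concave constraints
`h e p = c e - (H p.2) e ≥ 0`. The set of `(u, r)` with `u < h p` and `r < f p` for some `p ∈ D`
is open, convex and a lower set, and it misses `(0, f*)`; a hyperplane separating them has a
nonnegative normal `(ν, k)`, and `k > 0` because Slater's point puts `(0, f p₀ - 1)` in the set.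
Then `μ = ν / k` has `θ μ ≤ f*`, so there is no duality gap and every optimal `p` maximizes the
Lagrangian at a dual optimum `λ*`.

At `λ*` the Lagrangian is at most `λ*·c + ∑ₛ (Uₛ(xₛ) - γ(s,λ*) xₛ)`, with equality when every
session is routed on a cheapest tree. Hence the rates of a maximizer maximize each
`Uₛ(z) - γ(s,λ*) z` on `[mₛ, Mₛ]`, and uniqueness of that maximizer identifies them with `x†`.
-/

open Finset Set Filter Topology

lemma concaveOn_finset_sum {V ι : Type*} [AddCommGroup V] [Module ℝ V] {s : Set V}
    (hs : Convex ℝ s) (t : Finset ι) {f : ι → V → ℝ} (hf : ∀ i ∈ t, ConcaveOn ℝ s (f i)) :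
    ConcaveOn ℝ s fun x => ∑ i ∈ t, f i x := by
  classical
  induction t using Finset.induction_on with
  | empty => simpa using concaveOn_const 0 hs
  | insert i t hi ih =>
    simp only [sum_insert hi]
    exact (hf i (mem_insert_self i t)).add (ih fun j hj => hf j (mem_insert_of_mem hj))

lemma combo_lt_combo {x y x' y' a b : ℝ} (hx : x < x') (hy : y < y') (ha : 0 ≤ a) (hb : 0 ≤ b)
    (hab : a + b = 1) : a * x + b * y < a * x' + b * y' := by
  rcases ha.eq_or_lt with rfl | ha
  · simp_all
  · nlinarith [mul_le_mul_of_nonneg_left hy.le hb]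

lemma LinearMap.nonneg_of_forall_sub_smul_lt {W : Type*} [AddCommGroup W] [Module ℝ W]
    (ℓ : W →ₗ[ℝ] ℝ) {a d : W} {b : ℝ} (h : ∀ t : ℝ, 0 ≤ t → ℓ (a - t • d) < b) : 0 ≤ ℓ d := by
  by_contra! hd
  have h₀ : ℓ a < b := by simpa using h 0 le_rfl
  have hb : ℓ (a - ((b - ℓ a) / -ℓ d) • d) = b := by
    rw [map_sub, map_smul, smul_eq_mul, div_mul_eq_mul_div, div_neg, mul_div_cancel_right₀ _ hd.ne]
    ring
  exact (h _ (div_nonneg (by linarith) (by linarith))).ne hb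

lemma LinearMap.apply_prod_eq_sum {ι : Type*} [Fintype ι] [DecidableEq ι]
    (ℓ : (ι → ℝ) × ℝ →ₗ[ℝ] ℝ) (u : ι → ℝ) (r : ℝ) :
    ℓ (u, r) = ∑ i, u i * ℓ (Pi.single i 1, 0) + r * ℓ (0, 1) := by
  have : (u, r) = ∑ i, u i • ((Pi.single i 1 : ι → ℝ), (0 : ℝ)) + r • ((0 : ι → ℝ), (1 : ℝ)) := by
    ext <;> simp [Prod.fst_sum, Prod.snd_sum, Pi.single_apply]
  rw [this, map_add, map_sum, map_smul]
  simp only [map_smul, smul_eq_mul]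

section LagrangeDuality

variable {V ι : Type*} {D : Set V} {f : V → ℝ} {h : ι → V → ℝ}

def perturbationSet (D : Set V) (f : V → ℝ) (h : ι → V → ℝ) : Set ((ι → ℝ) × ℝ) :=
  ⋃ p ∈ D, {a | (∀ i, a.1 i < h i p) ∧ a.2 < f p}

lemma isOpen_perturbationSet [Finite ι] : IsOpen (perturbationSet D f h) :=
  isOpen_biUnion fun p _ => by
    simp only [ofPred_and, ofPred_forall]
    exact (isOpen_iInter_of_finite fun i =>
      isOpen_lt ((continuous_apply i).comp continuous_fst) continuous_const).inter
        (isOpen_lt continuous_snd continuous_const)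

lemma isLowerSet_perturbationSet : IsLowerSet (perturbationSet D f h) := by
  intro a b hba ha
  simp only [perturbationSet, mem_iUnion₂] at ha ⊢
  obtain ⟨p, hp, hh, hf⟩ := ha
  exact ⟨p, hp, fun i => (hba.1 i).trans_lt (hh i), hba.2.trans_lt hf⟩

lemma convex_perturbationSet [AddCommGroup V] [Module ℝ V] (hf : ConcaveOn ℝ D f)
    (hh : ∀ i, ConcaveOn ℝ D (h i)) : Convex ℝ (perturbationSet D f h) := by
  intro a ha b hb s t hs ht hst
  simp only [perturbationSet, mem_iUnion₂] at ha hb ⊢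
  obtain ⟨p, hp, hhp, hfp⟩ := ha
  obtain ⟨q, hq, hhq, hfq⟩ := hb
  refine ⟨s • p + t • q, hf.1 hp hq hs ht hst, fun i => ?_, ?_⟩
  · exact (combo_lt_combo (hhp i) (hhq i) hs ht hst).trans_le ((hh i).2 hp hq hs ht hst)
  · exact (combo_lt_combo hfp hfq hs ht hst).trans_le (hf.2 hp hq hs ht hst)

lemma mem_closure_perturbationSet {p : V} (hp : p ∈ D) :
    ((fun i => h i p), f p) ∈ closure (perturbationSet D f h) := by
  refine mem_closure_of_tendsto (b := 𝓝[>] 0) (f := fun ε : ℝ => ((fun i => h i p - ε), f p - ε))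
    ((Continuous.tendsto' (by fun_prop) 0 _ (by simp)).mono_left nhdsWithin_le_nhds)
    (eventually_nhdsWithin_of_forall fun ε (hε : 0 < ε) => ?_)
  simp only [perturbationSet, mem_iUnion₂]
  exact ⟨p, hp, fun i => sub_lt_self _ hε, sub_lt_self _ hε⟩

theorem exists_nonneg_multiplier_lagrangian_le [AddCommGroup V] [Module ℝ V] [Fintype ι]
    (hf : ConcaveOn ℝ D f) (hh : ∀ i, ConcaveOn ℝ D (h i)) (hslater : ∃ p ∈ D, ∀ i, 0 < h i p)
    {v : ℝ} (hv : ∀ p ∈ D, (∀ i, 0 ≤ h i p) → f p ≤ v) :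
    ∃ μ : ι → ℝ, (∀ i, 0 ≤ μ i) ∧ ∀ p ∈ D, f p + ∑ i, μ i * h i p ≤ v := by
  classical
  obtain ⟨p₀, hp₀, hslater⟩ := hslater
  set A := perturbationSet D f h
  have hvA : ((0 : ι → ℝ), v) ∉ A := by
    simp only [A, perturbationSet, mem_iUnion₂, not_exists]
    exact fun p hp ⟨hhp, hfp⟩ => (hv p hp fun i => (hhp i).le).not_gt hfp
  obtain ⟨ℓ, hℓ⟩ := geometric_hahn_banach_open_point (convex_perturbationSet hf hh)
    isOpen_perturbationSet hvA
  set ν : ι → ℝ := fun i => ℓ (Pi.single i 1, 0)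
  set k := ℓ (0, 1)
  have hℓ_apply (u : ι → ℝ) (r : ℝ) : ℓ (u, r) = ∑ i, u i * ν i + r * k :=
    ℓ.toLinearMap.apply_prod_eq_sum u r
  have ha₀ : ((0 : ι → ℝ), f p₀ - 1) ∈ A :=
    mem_iUnion₂.2 ⟨p₀, hp₀, hslater, sub_one_lt _⟩
  have hlower {d : (ι → ℝ) × ℝ} (hd : 0 ≤ d) : 0 ≤ ℓ d :=
    ℓ.toLinearMap.nonneg_of_forall_sub_smul_lt fun t ht =>
      hℓ _ (isLowerSet_perturbationSet (sub_le_self _ (smul_nonneg ht hd)) ha₀)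
  have hν (i : ι) : 0 ≤ ν i := hlower (by simp [Prod.le_def, Pi.single_nonneg])
  have hk : 0 < k := by
    refine (hlower (by simp [Prod.le_def])).lt_of_ne fun hk => ?_
    have := hℓ _ ha₀
    rw [hℓ_apply, hℓ_apply, show k = 0 from hk.symm] at this
    simp at this
  refine ⟨fun i => ν i / k, fun i => div_nonneg (hν i) hk.le, fun p hp => ?_⟩
  have hp_le : ℓ ((fun i => h i p), f p) ≤ ℓ (0, v) :=
    closure_lt_subset_le ℓ.continuous continuous_const
      (closure_mono (fun a ha => hℓ a ha) (mem_closure_perturbationSet hp))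
  rw [hℓ_apply, hℓ_apply] at hp_le
  have : f p + ∑ i, ν i / k * h i p = (∑ i, h i p * ν i + f p * k) / k := by
    rw [add_div, sum_div, mul_div_cancel_right₀ _ hk.ne', add_comm]
    congr 1
    exact sum_congr rfl fun i _ => by ring
  rw [this, div_le_iff₀ hk]
  simpa using hp_le

theorem dual_optimum_le_lagrangian [AddCommGroup V] [Module ℝ V] [Fintype ι]
    (hf : ConcaveOn ℝ D f) (hh : ∀ i, ConcaveOn ℝ D (h i)) (hslater : ∃ p ∈ D, ∀ i, 0 < h i p)
    {θ : (ι → ℝ) → ℝ} (hθ : ∀ μ, ∃ q ∈ D, θ μ = f q + ∑ i, μ i * h i q) {lam : ι → ℝ}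
    (hlam₀ : ∀ i, 0 ≤ lam i) (hlam : ∀ μ : ι → ℝ, (∀ i, 0 ≤ μ i) → θ lam ≤ θ μ) {p : V}
    (hp_feas : ∀ i, 0 ≤ h i p) (hp_opt : ∀ q ∈ D, (∀ i, 0 ≤ h i q) → f q ≤ f p) :
    θ lam ≤ f p + ∑ i, lam i * h i p := by
  obtain ⟨μ, hμ₀, hμ⟩ := exists_nonneg_multiplier_lagrangian_le hf hh hslater hp_opt
  obtain ⟨q, hq, hθq⟩ := hθ μ
  calc θ lam ≤ θ μ := hlam μ hμ₀
    _ ≤ f p := hθq ▸ hμ q hq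
    _ ≤ f p + ∑ i, lam i * h i p :=
      le_add_of_nonneg_right (sum_nonneg fun i _ => mul_nonneg (hlam₀ i) (hp_feas i))

end LagrangeDuality

section Network

variable {S T E : Type*} [Fintype T]

def routingDomain [DecidableEq S] (σ : T → S) (m M : S → ℝ) : Set ((S → ℝ) × (T → ℝ)) :=
  {p | (∀ t, 0 ≤ p.2 t) ∧ (∀ s, p.1 s = ∑ t, if σ t = s then p.2 t else 0) ∧
    (∀ s, p.1 s ∈ Icc (m s) (M s))}

def lagrangian [Fintype S] [Fintype E] (U : S → ℝ → ℝ) (H : E → T → ℝ) (c lam : E → ℝ)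
    (p : (S → ℝ) × (T → ℝ)) : ℝ :=
  ∑ s, U s (p.1 s) + ∑ e, lam e * (c e - ∑ t, H e t * p.2 t)

def route [Fintype S] [DecidableEq T] (τ : S → T) (x : S → ℝ) (t : T) : ℝ :=
  ∑ s, if τ s = t then x s else 0

lemma sum_mul_route [Fintype S] [DecidableEq T] (τ : S → T) (x : S → ℝ) (w : T → ℝ) :
    ∑ t, w t * route τ x t = ∑ s, w (τ s) * x s := by
  simp only [route, mul_sum, mul_ite, mul_zero]
  rw [sum_comm]
  simp

lemma sum_mul_sum_fiber [Fintype S] [DecidableEq S] (σ : T → S) (g : S → ℝ) (y : T → ℝ) :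
    ∑ s, g s * (∑ t, if σ t = s then y t else 0) = ∑ t, g (σ t) * y t := by
  simp only [mul_sum, mul_ite, mul_zero]
  rw [sum_comm]
  simp

section Lagrangian

variable [Fintype S] [Fintype E] (U : S → ℝ → ℝ) (H : E → T → ℝ) (c : E → ℝ)

lemma lagrangian_eq_sub (lam : E → ℝ) (p : (S → ℝ) × (T → ℝ)) :
    lagrangian U H c lam p =
      ∑ e, lam e * c e + ∑ s, U s (p.1 s) - ∑ t, (∑ e, H e t * lam e) * p.2 t := by
  simp only [lagrangian, mul_sub, sum_sub_distrib, mul_sum, sum_mul]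
  rw [sum_comm (f := fun e t => lam e * (H e t * p.2 t))]
  simp only [mul_left_comm, mul_assoc]
  ring

lemma lagrangian_route [DecidableEq T] (lam : E → ℝ) (τ : S → T) (x : S → ℝ) :
    lagrangian U H c lam (x, route τ x) =
      ∑ e, lam e * c e + ∑ s, (U s (x s) - (∑ e, H e (τ s) * lam e) * x s) := by
  rw [lagrangian_eq_sub, sum_mul_route, sum_sub_distrib]
  ring

end Lagrangian

variable [DecidableEq S] {σ : T → S} {m M : S → ℝ}

lemma convex_routingDomain : Convex ℝ (routingDomain σ m M) := by
  rintro p ⟨hp₀, hpσ, hpI⟩ q ⟨hq₀, hqσ, hqI⟩ a b ha hb hab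
  refine ⟨fun t => ?_, fun s => ?_, fun s => convex_Icc _ _ (hpI s) (hqI s) ha hb hab⟩
  · simp only [Prod.snd_add, Prod.smul_snd, Pi.add_apply, Pi.smul_apply, smul_eq_mul]
    exact add_nonneg (mul_nonneg ha (hp₀ t)) (mul_nonneg hb (hq₀ t))
  · simp only [Prod.fst_add, Prod.smul_fst, Prod.snd_add, Prod.smul_snd, Pi.add_apply,
      Pi.smul_apply, smul_eq_mul, hpσ s, hqσ s, mul_sum, ← sum_add_distrib]
    exact sum_congr rfl fun t _ => by split_ifs <;> simp

lemma route_mem_routingDomain [Fintype S] [DecidableEq T] {τ : S → T} (hτ : ∀ s, σ (τ s) = s)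
    (hm : ∀ s, 0 ≤ m s) {x : S → ℝ} (hx : ∀ s, x s ∈ Icc (m s) (M s)) :
    (x, route τ x) ∈ routingDomain σ m M := by
  refine ⟨fun t => sum_nonneg fun s _ => ?_, fun s => ?_, hx⟩
  · split_ifs
    exacts [(hm s).trans (hx s).1, le_rfl]
  · have := sum_mul_route τ x fun t => if σ t = s then 1 else 0
    simp only [ite_mul, one_mul, zero_mul, hτ] at this
    simp [this]

variable (U : S → ℝ → ℝ) (H : E → T → ℝ) (c : E → ℝ)

lemma concaveOn_sum_utility [Fintype S] (hU : ∀ s, ConcaveOn ℝ (Icc (m s) (M s)) (U s)) :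
    ConcaveOn ℝ (routingDomain σ m M) fun p => ∑ s, U s (p.1 s) :=
  concaveOn_finset_sum convex_routingDomain _ fun s _ =>
    ((hU s).comp_linearMap (LinearMap.proj s ∘ₗ LinearMap.fst ℝ _ _)).subset
      (fun _ hp => hp.2.2 s) convex_routingDomain

lemma concaveOn_capacity_slack (e : E) :
    ConcaveOn ℝ (routingDomain σ m M) fun p => c e - ∑ t, H e t * p.2 t :=
  ((concaveOn_const (c e) convex_routingDomain).sub
    (((∑ t, H e t • LinearMap.proj t) ∘ₗ LinearMap.snd ℝ (S → ℝ) (T → ℝ)).convexOn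
      convex_routingDomain)).congr fun p _ => by simp

lemma lagrangian_le_of_mem [Fintype S] [Fintype E] {lam : E → ℝ} {γ : S → ℝ}
    (hγ : ∀ t, γ (σ t) ≤ ∑ e, H e t * lam e) {p : (S → ℝ) × (T → ℝ)}
    (hp : p ∈ routingDomain σ m M) :
    lagrangian U H c lam p ≤ ∑ e, lam e * c e + ∑ s, (U s (p.1 s) - γ s * p.1 s) := by
  have hcost : ∑ s, γ s * p.1 s ≤ ∑ t, (∑ e, H e t * lam e) * p.2 t :=
    calc ∑ s, γ s * p.1 s = ∑ t, γ (σ t) * p.2 t := by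
          simp only [hp.2.1]
          exact sum_mul_sum_fiber σ γ p.2
      _ ≤ _ := sum_le_sum fun t _ => mul_le_mul_of_nonneg_right (hγ t) (hp.1 t)
  rw [lagrangian_eq_sub, sum_sub_distrib]
  linarith

theorem rate_eq_of_isMaxOn_lagrangian [Fintype S] [Fintype E] (hm : ∀ s, 0 ≤ m s)
    {lam : E → ℝ} {γ : S → ℝ}
    (hγ : ∀ s, IsLeast {w | ∃ t, σ t = s ∧ w = ∑ e, H e t * lam e} (γ s)) {x : S → ℝ}
    (hx : ∀ s, x s ∈ Icc (m s) (M s) ∧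
      (∀ z ∈ Icc (m s) (M s), U s z - γ s * z ≤ U s (x s) - γ s * x s) ∧
      (∀ z ∈ Icc (m s) (M s), U s z - γ s * z = U s (x s) - γ s * x s → z = x s))
    {p : (S → ℝ) × (T → ℝ)} (hp : p ∈ routingDomain σ m M)
    (hmax : IsMaxOn (lagrangian U H c lam) (routingDomain σ m M) p) : p.1 = x := by
  classical
  choose τ hτσ hτγ using fun s => (hγ s).1
  have hupper := lagrangian_le_of_mem U H c (fun t => (hγ (σ t)).2 ⟨t, rfl, rfl⟩) hp
  have hlower := isMaxOn_iff.1 hmax _ (route_mem_routingDomain hτσ hm fun s => (hx s).1)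
  simp only [lagrangian_route, ← hτγ] at hlower
  have hle (s : S) (_ : s ∈ Finset.univ) :
      U s (p.1 s) - γ s * p.1 s ≤ U s (x s) - γ s * x s :=
    (hx s).2.1 _ (hp.2.2 s)
  have heq := (sum_eq_sum_iff_of_le hle).1 ((sum_le_sum hle).antisymm (by linarith))
  exact funext fun s => (hx s).2.2 _ (hp.2.2 s) (heq s (mem_univ s))

end Network

theorem primal_recovery_from_dual_optimum_general
    {S T E : Type} [Fintype S] [Fintype T] [Fintype E]
    [DecidableEq S]
    (σ : T → S)
    (H : E → T → ℝ)
    (c : E → ℝ)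
    (m M : S → ℝ) (hm : ∀ s, 0 ≤ m s)
    (U : S → ℝ → ℝ)
    -- Assumption A1
    (hUconc : ∀ s, StrictConcaveOn ℝ (Set.Icc (m s) (M s)) (U s))
    -- the domain D
    (D : Set ((S → ℝ) × (T → ℝ)))
    (hD : D = {p | (∀ t, 0 ≤ p.2 t) ∧
      (∀ s, p.1 s = ∑ t, if σ t = s then p.2 t else 0) ∧
      (∀ s, p.1 s ∈ Set.Icc (m s) (M s))})
    -- the Lagrangian
    (L : (S → ℝ) → (T → ℝ) → (E → ℝ) → ℝ)
    (hL : ∀ x y lam, L x y lam =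
      ∑ s, U s (x s) + ∑ e, lam e * (c e - ∑ t, H e t * y t))
    -- the optimal value of the master problem
    (fStar : ℝ)
    (hfStar : IsGreatest {v | ∃ p ∈ D, (∀ e, ∑ t, H e t * p.2 t ≤ c e) ∧
      v = ∑ s, U s (p.1 s)} fStar)
    -- the dual function
    (θ : (E → ℝ) → ℝ)
    (hθ : ∀ lam : E → ℝ, IsGreatest {v | ∃ p ∈ D, v = L p.1 p.2 lam} (θ lam))
    -- Assumption A2 (Slater)
    (hslater : ∃ p ∈ D, ∀ e, ∑ t, H e t * p.2 t < c e)
    -- the minimum tree cost γ(s, λ)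
    (γ : S → (E → ℝ) → ℝ)
    (hγ : ∀ s lam, IsLeast {w | ∃ t, σ t = s ∧ w = ∑ e, H e t * lam e} (γ s lam))
    -- x_s†(w) : the unique maximizer of x ↦ U_s(x) - w·x over [m_s, M_s]
    (xdag : S → ℝ → ℝ)
    (hxdag : ∀ (s : S) (w : ℝ), xdag s w ∈ Set.Icc (m s) (M s) ∧
      (∀ z ∈ Set.Icc (m s) (M s), U s z - w * z ≤ U s (xdag s w) - w * xdag s w) ∧
      (∀ z ∈ Set.Icc (m s) (M s),
        U s z - w * z = U s (xdag s w) - w * xdag s w → z = xdag s w))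
    -- λ* is a dual optimal solution, i.e. a member of Λ*
    (lamStar : E → ℝ)
    (hlamStar : (∀ e, 0 ≤ lamStar e) ∧
      ∀ μ : E → ℝ, (∀ e, 0 ≤ μ e) → θ lamStar ≤ θ μ)
    -- the candidate optimal session-rate vector
    (x : S → ℝ) (hx : ∀ s, x s = xdag s (γ s lamStar)) :
    (∃ y : T → ℝ, (x, y) ∈ D ∧ (∀ e, ∑ t, H e t * y t ≤ c e) ∧
      ∑ s, U s (x s) = fStar) ∧
    (∀ p ∈ D, (∀ e, ∑ t, H e t * p.2 t ≤ c e) →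
      ∑ s, U s (p.1 s) = fStar → p.1 = x) := by
  obtain rfl : D = routingDomain σ m M := hD
  obtain rfl : x = fun s => xdag s (γ s lamStar) := funext hx
  have hslater' : ∃ p ∈ routingDomain σ m M, ∀ e, 0 < c e - ∑ t, H e t * p.2 t :=
    let ⟨p, hp, hlt⟩ := hslater
    ⟨p, hp, fun e => sub_pos.2 (hlt e)⟩
  have hθ_attained (μ : E → ℝ) : ∃ q ∈ routingDomain σ m M,
      θ μ = ∑ s, U s (q.1 s) + ∑ e, μ e * (c e - ∑ t, H e t * q.2 t) := by
    simpa only [hL, mem_ofPred_eq] using (hθ μ).1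
  have hopt (p) (hp : p ∈ routingDomain σ m M) (hp_feas : ∀ e, ∑ t, H e t * p.2 t ≤ c e)
      (hp_val : ∑ s, U s (p.1 s) = fStar) : p.1 = fun s => xdag s (γ s lamStar) := by
    subst hp_val
    have hθp : θ lamStar ≤ lagrangian U H c lamStar p :=
      dual_optimum_le_lagrangian (concaveOn_sum_utility U fun s => (hUconc s).concaveOn)
        (concaveOn_capacity_slack H c) hslater' hθ_attained
        hlamStar.1 hlamStar.2 (fun e => sub_nonneg.2 (hp_feas e))
        fun q hq hq_feas => hfStar.2 ⟨q, hq, fun e => sub_nonneg.1 (hq_feas e), rfl⟩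
    exact rate_eq_of_isMaxOn_lagrangian U H c hm (fun s => hγ s lamStar) (fun s => hxdag s _) hp
      (isMaxOn_iff.2 fun q hq => (hL q.1 q.2 lamStar ▸ (hθ lamStar).2 ⟨q, hq, rfl⟩).trans hθp)
  obtain ⟨p, hp, hp_feas, rfl⟩ := hfStar.1
  have hpx := hopt p hp hp_feas rfl
  refine ⟨⟨p.2, ?_, hp_feas, by rw [← hpx]⟩, hopt⟩
  rwa [← hpx]

/-- under A1 and A2, for every dual optimal λ* the vector
x_s = x_s†(γ(s,λ*)) is the unique optimal session-rate vector of the MP. -/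
theorem primal_recovery_from_dual_optimum
    {S T E : Type} [Fintype S] [Fintype T] [Fintype E]
    [Nonempty S] [Nonempty T] [Nonempty E] [DecidableEq S] [DecidableEq T]
    (σ : T → S) (hσ : Function.Surjective σ)
    (H : E → T → ℝ) (hH : ∀ e t, H e t = 0 ∨ H e t = 1)
    (c : E → ℝ) (hc : ∀ e, 0 < c e)
    (m M : S → ℝ) (hm : ∀ s, 0 ≤ m s) (hmM : ∀ s, m s < M s)
    (U : S → ℝ → ℝ)
    -- Assumption A1
    (hUmono : ∀ s, MonotoneOn (U s) (Set.Icc (m s) (M s)))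
    (hUconc : ∀ s, StrictConcaveOn ℝ (Set.Icc (m s) (M s)) (U s))
    (hUdiff : ∀ s, ContDiffOn ℝ 1 (U s) (Set.Icc (m s) (M s)))
    -- the domain D
    (D : Set ((S → ℝ) × (T → ℝ)))
    (hD : D = {p | (∀ t, 0 ≤ p.2 t) ∧
      (∀ s, p.1 s = ∑ t, if σ t = s then p.2 t else 0) ∧
      (∀ s, p.1 s ∈ Set.Icc (m s) (M s))})
    -- the Lagrangian
    (L : (S → ℝ) → (T → ℝ) → (E → ℝ) → ℝ)
    (hL : ∀ x y lam, L x y lam =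
      ∑ s, U s (x s) + ∑ e, lam e * (c e - ∑ t, H e t * y t))
    -- the optimal value of the master problem
    (fStar : ℝ)
    (hfStar : IsGreatest {v | ∃ p ∈ D, (∀ e, ∑ t, H e t * p.2 t ≤ c e) ∧
      v = ∑ s, U s (p.1 s)} fStar)
    -- the dual function
    (θ : (E → ℝ) → ℝ)
    (hθ : ∀ lam : E → ℝ, IsGreatest {v | ∃ p ∈ D, v = L p.1 p.2 lam} (θ lam))
    -- Assumption A2 (Slater)
    (hslater : ∃ p ∈ D, ∀ e, ∑ t, H e t * p.2 t < c e)
    -- the minimum tree cost γ(s, λ)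
    (γ : S → (E → ℝ) → ℝ)
    (hγ : ∀ s lam, IsLeast {w | ∃ t, σ t = s ∧ w = ∑ e, H e t * lam e} (γ s lam))
    -- x_s†(w) : the unique maximizer of x ↦ U_s(x) - w·x over [m_s, M_s]
    (xdag : S → ℝ → ℝ)
    (hxdag : ∀ (s : S) (w : ℝ), xdag s w ∈ Set.Icc (m s) (M s) ∧
      (∀ z ∈ Set.Icc (m s) (M s), U s z - w * z ≤ U s (xdag s w) - w * xdag s w) ∧
      (∀ z ∈ Set.Icc (m s) (M s),
        U s z - w * z = U s (xdag s w) - w * xdag s w → z = xdag s w))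
    -- λ* is a dual optimal solution, i.e. a member of Λ*
    (lamStar : E → ℝ)
    (hlamStar : (∀ e, 0 ≤ lamStar e) ∧
      ∀ μ : E → ℝ, (∀ e, 0 ≤ μ e) → θ lamStar ≤ θ μ)
    -- the candidate optimal session-rate vector
    (x : S → ℝ) (hx : ∀ s, x s = xdag s (γ s lamStar)) :
    (∃ y : T → ℝ, (x, y) ∈ D ∧ (∀ e, ∑ t, H e t * y t ≤ c e) ∧
      ∑ s, U s (x s) = fStar) ∧
    (∀ p ∈ D, (∀ e, ∑ t, H e t * p.2 t ≤ c e) →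
      ∑ s, U s (p.1 s) = fStar → p.1 = x) :=
  primal_recovery_from_dual_optimum_general σ H c m M hm U hUconc D hD L hL fStar hfStar θ hθ
    hslater γ hγ xdag hxdag lamStar hlamStar x hx
end

section
/- Under Assumption A1, for every λ ≥ 0 the dual function evaluates explicitly as θ(λ) = Σ_{e∈E} λ_e c_e + Σ_{s∈S} h_s(γ(s,λ)); consequently, for any subset T' ⊆ T containing at least one tree of every session, θ(λ) − θ'(λ) = Σ_{s∈S} (h_s(γ(s,λ)) − h_s(γ'(s,λ))). -/
/-!
With `cost t = ∑ e, H e t * λ e` the price of tree `t`, the Lagrangian equals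
`∑ e, λ e * c e + ∑ s, U s (x s) - ∑ t, y t * cost t`. Since `y ≥ 0` and `x s` is the total rate
of the trees of session `s`, the last sum is at least `∑ s, γ(s, λ) * x s`, with equality when every
session sends its whole rate over one of its cheapest trees. So the supremum splits into the
one-dimensional problems `max_x U s x - γ(s, λ) * x = h_s(γ(s, λ))`. The restricted problem is the
same computation with the trees outside `T'` forced to carry nothing, which replaces `γ` by `γ'`.
-/

open Finset

namespace MulticastDual

variable {S T E : Type*} [Fintype S] [Fintype T] [Fintype E]

def treeCost (H : E → T → ℝ) (lam : E → ℝ) (t : T) : ℝ :=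
  ∑ e, H e t * lam e

def lagrangian (U : S → ℝ → ℝ) (c : E → ℝ) (H : E → T → ℝ)
    (x : S → ℝ) (y : T → ℝ) (lam : E → ℝ) : ℝ :=
  ∑ s, U s (x s) + ∑ e, lam e * (c e - ∑ t, H e t * y t)

/-- The paper's `h_s(w)`. -/
def netUtility (U : S → ℝ → ℝ) (xdag : S → ℝ → ℝ) (s : S) (w : ℝ) : ℝ :=
  U s (xdag s w) - w * xdag s w

theorem sum_mul_treeCost (H : E → T → ℝ) (lam : E → ℝ) (y : T → ℝ) :
    ∑ e, lam e * ∑ t, H e t * y t = ∑ t, y t * treeCost H lam t := by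
  simp_rw [treeCost, mul_sum]
  rw [sum_comm]
  exact sum_congr rfl fun _ _ => sum_congr rfl fun _ _ => by ring

theorem lagrangian_eq (U : S → ℝ → ℝ) (c : E → ℝ) (H : E → T → ℝ)
    (x : S → ℝ) (y : T → ℝ) (lam : E → ℝ) :
    lagrangian U c H x y lam =
      ∑ e, lam e * c e + ∑ s, U s (x s) - ∑ t, y t * treeCost H lam t := by
  simp only [lagrangian, mul_sub, sum_sub_distrib, sum_mul_treeCost]
  ring

section Concentrate

variable [DecidableEq T]

def concentrate (ts : S → T) (x : S → ℝ) (t : T) : ℝ :=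
  ∑ s, if ts s = t then x s else 0

theorem sum_concentrate_mul (ts : S → T) (x : S → ℝ) (f : T → ℝ) :
    ∑ t, concentrate ts x t * f t = ∑ s, x s * f (ts s) := by
  simp_rw [concentrate, sum_mul]
  rw [sum_comm]
  simp [ite_mul]

theorem lagrangian_concentrate (U : S → ℝ → ℝ) (c : E → ℝ) (H : E → T → ℝ)
    (ts : S → T) (x : S → ℝ) (lam : E → ℝ) :
    lagrangian U c H x (concentrate ts x) lam =
      ∑ e, lam e * c e + ∑ s, (U s (x s) - treeCost H lam (ts s) * x s) := by
  rw [lagrangian_eq, sum_concentrate_mul, sum_sub_distrib]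
  simp only [mul_comm]
  ring

end Concentrate

variable [DecidableEq S]

def feasibleSet (σ : T → S) (m M : S → ℝ) : Set ((S → ℝ) × (T → ℝ)) :=
  {p | (∀ t, 0 ≤ p.2 t) ∧ (∀ s, p.1 s = ∑ t, if σ t = s then p.2 t else 0) ∧
    ∀ s, p.1 s ∈ Set.Icc (m s) (M s)}

theorem sum_mul_sum_ite_eq (σ : T → S) (g : S → ℝ) (y : T → ℝ) :
    ∑ s, g s * ∑ t, (if σ t = s then y t else 0) = ∑ t, g (σ t) * y t := by
  simp_rw [mul_sum]
  rw [sum_comm]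
  simp [mul_ite]

theorem sum_ite_concentrate [DecidableEq T] {σ : T → S} {ts : S → T} (hts : ∀ s, σ (ts s) = s)
    (x : S → ℝ) (s : S) :
    ∑ t, (if σ t = s then concentrate ts x t else 0) = x s := by
  simpa [hts] using sum_concentrate_mul ts x fun t => if σ t = s then 1 else 0

variable {σ : T → S} {m M : S → ℝ} {P : Set T} {U : S → ℝ → ℝ} {c : E → ℝ}
  {H : E → T → ℝ} {lam : E → ℝ} {xdag : S → ℝ → ℝ}

theorem lagrangian_le {g : S → ℝ} (hg : ∀ t ∈ P, g (σ t) ≤ treeCost H lam t)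
    (hmax : ∀ s w, ∀ z ∈ Set.Icc (m s) (M s), U s z - w * z ≤ netUtility U xdag s w)
    {p : (S → ℝ) × (T → ℝ)} (hp : p ∈ {p ∈ feasibleSet σ m M | ∀ t ∉ P, p.2 t = 0}) :
    lagrangian U c H p.1 p.2 lam ≤ ∑ e, lam e * c e + ∑ s, netUtility U xdag s (g s) := by
  obtain ⟨⟨hy, hx, hbox⟩, hsupp⟩ := hp
  have hcost : ∑ s, g s * p.1 s ≤ ∑ t, p.2 t * treeCost H lam t := calc
    ∑ s, g s * p.1 s = ∑ t, g (σ t) * p.2 t := by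
      simp only [hx]
      exact sum_mul_sum_ite_eq σ g p.2
    _ ≤ ∑ t, p.2 t * treeCost H lam t := sum_le_sum fun t _ => by
      by_cases ht : t ∈ P
      · rw [mul_comm]
        exact mul_le_mul_of_nonneg_left (hg t ht) (hy t)
      · simp [hsupp t ht]
  have hutil : ∑ s, (U s (p.1 s) - g s * p.1 s) ≤ ∑ s, netUtility U xdag s (g s) :=
    sum_le_sum fun s _ => hmax s (g s) (p.1 s) (hbox s)
  rw [lagrangian_eq]
  rw [sum_sub_distrib] at hutil
  linarith

theorem concentrate_mem [DecidableEq T] {ts : S → T} (hts : ∀ s, σ (ts s) = s)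
    (htsP : ∀ s, ts s ∈ P) (hm : ∀ s, 0 ≤ m s) {x : S → ℝ}
    (hx : ∀ s, x s ∈ Set.Icc (m s) (M s)) :
    (x, concentrate ts x) ∈ {p ∈ feasibleSet σ m M | ∀ t ∉ P, p.2 t = 0} := by
  refine ⟨⟨fun t => sum_nonneg fun s _ => ?_, fun s => (sum_ite_concentrate hts x s).symm, hx⟩,
    fun t ht => sum_eq_zero fun s _ => if_neg ?_⟩
  · split_ifs
    exacts [(hm s).trans (hx s).1, le_rfl]
  · rintro rfl
    exact ht (htsP s)

theorem isGreatest_lagrangian {g : S → ℝ}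
    (hg : ∀ s, IsLeast {w | ∃ t ∈ P, σ t = s ∧ w = treeCost H lam t} (g s))
    (hm : ∀ s, 0 ≤ m s) (hmem : ∀ s w, xdag s w ∈ Set.Icc (m s) (M s))
    (hmax : ∀ s w, ∀ z ∈ Set.Icc (m s) (M s), U s z - w * z ≤ netUtility U xdag s w) :
    IsGreatest {v | ∃ p ∈ {p ∈ feasibleSet σ m M | ∀ t ∉ P, p.2 t = 0},
        v = lagrangian U c H p.1 p.2 lam}
      (∑ e, lam e * c e + ∑ s, netUtility U xdag s (g s)) := by
  classical
  choose ts htsP hts hcost using fun s => (hg s).1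
  refine ⟨⟨_, concentrate_mem hts htsP hm fun s => hmem s (g s), ?_⟩, ?_⟩
  · simp only [lagrangian_concentrate, ← hcost, netUtility]
  · rintro _ ⟨p, hp, rfl⟩
    exact lagrangian_le (fun t ht => (hg _).2 ⟨t, ht, rfl, rfl⟩) hmax hp

end MulticastDual

open MulticastDual

theorem dual_function_explicit_general
    {S T E : Type} [Fintype S] [Fintype T] [Fintype E]
    [DecidableEq S]
    (σ : T → S)
    (H : E → T → ℝ)
    (c : E → ℝ)
    (m M : S → ℝ) (hm : ∀ s, 0 ≤ m s)
    (U : S → ℝ → ℝ)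
    -- the domain D
    (D : Set ((S → ℝ) × (T → ℝ)))
    (hD : D = {p | (∀ t, 0 ≤ p.2 t) ∧
      (∀ s, p.1 s = ∑ t, if σ t = s then p.2 t else 0) ∧
      (∀ s, p.1 s ∈ Set.Icc (m s) (M s))})
    -- the Lagrangian
    (L : (S → ℝ) → (T → ℝ) → (E → ℝ) → ℝ)
    (hL : ∀ x y lam, L x y lam =
      ∑ s, U s (x s) + ∑ e, lam e * (c e - ∑ t, H e t * y t))
    -- the dual function
    (θ : (E → ℝ) → ℝ)
    (hθ : ∀ lam : E → ℝ, IsGreatest {v | ∃ p ∈ D, v = L p.1 p.2 lam} (θ lam))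
    -- the minimum tree cost γ(s, λ)
    (γ : S → (E → ℝ) → ℝ)
    (hγ : ∀ s lam, IsLeast {w | ∃ t, σ t = s ∧ w = ∑ e, H e t * lam e} (γ s lam))
    -- x_s†(w) : the unique maximizer of x ↦ U_s(x) - w·x over [m_s, M_s]
    (xdag : S → ℝ → ℝ)
    (hxdag : ∀ (s : S) (w : ℝ), xdag s w ∈ Set.Icc (m s) (M s) ∧
      (∀ z ∈ Set.Icc (m s) (M s), U s z - w * z ≤ U s (xdag s w) - w * xdag s w) ∧
      (∀ z ∈ Set.Icc (m s) (M s),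
        U s z - w * z = U s (xdag s w) - w * xdag s w → z = xdag s w))
    -- the restricted tree set T', containing at least one tree of every session
    (T' : Finset T)
    -- the domain D' of the restricted master problem
    (D' : Set ((S → ℝ) × (T → ℝ)))
    (hD' : D' = {p | p ∈ D ∧ ∀ t ∉ T', p.2 t = 0})
    -- the dual function of the RMP
    (θ' : (E → ℝ) → ℝ)
    (hθ' : ∀ lam : E → ℝ, IsGreatest {v | ∃ p ∈ D', v = L p.1 p.2 lam} (θ' lam))
    -- the local minimum tree cost
    (γ' : S → (E → ℝ) → ℝ)
    (hγ' : ∀ s lam,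
      IsLeast {w | ∃ t ∈ T', σ t = s ∧ w = ∑ e, H e t * lam e} (γ' s lam)) :
    ∀ lam : E → ℝ, (∀ e, 0 ≤ lam e) →
      θ lam = ∑ e, lam e * c e +
        ∑ s, (U s (xdag s (γ s lam)) - γ s lam * xdag s (γ s lam)) ∧
      θ lam - θ' lam =
        ∑ s, ((U s (xdag s (γ s lam)) - γ s lam * xdag s (γ s lam)) -
          (U s (xdag s (γ' s lam)) - γ' s lam * xdag s (γ' s lam))) := by
  intro lam _
  subst hD hD'
  obtain rfl : L = lagrangian U c H := funext fun x => funext fun y => funext (hL x y)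
  have hmem s w := (hxdag s w).1
  have hmax s w := (hxdag s w).2.1
  have hθ_eq : θ lam = ∑ e, lam e * c e + ∑ s, netUtility U xdag s (γ s lam) := by
    have hall : {p ∈ feasibleSet σ m M | ∀ t ∉ (Set.univ : Set T), p.2 t = 0} =
        feasibleSet σ m M := by
      simp
    have := isGreatest_lagrangian (σ := σ) (P := Set.univ) (c := c)
      (fun s => by simpa [treeCost] using hγ s lam) hm hmem hmax
    rw [hall] at this
    exact (hθ lam).unique this
  have hθ'_eq : θ' lam = ∑ e, lam e * c e + ∑ s, netUtility U xdag s (γ' s lam) :=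
    (hθ' lam).unique (isGreatest_lagrangian (σ := σ) (P := ↑T') (c := c) (hγ' · lam) hm hmem hmax)
  refine ⟨hθ_eq, ?_⟩
  rw [hθ_eq, hθ'_eq, add_sub_add_left_eq_sub, ← sum_sub_distrib]
  rfl

/-- the explicit evaluation of the dual function,
θ(λ) = Σ_e λ_e c_e + Σ_s h_s(γ(s,λ)), and the resulting formula for θ(λ) − θ'(λ). -/
theorem dual_function_explicit
    {S T E : Type} [Fintype S] [Fintype T] [Fintype E]
    [Nonempty S] [Nonempty T] [Nonempty E] [DecidableEq S] [DecidableEq T]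
    (σ : T → S) (hσ : Function.Surjective σ)
    (H : E → T → ℝ) (hH : ∀ e t, H e t = 0 ∨ H e t = 1)
    (c : E → ℝ) (hc : ∀ e, 0 < c e)
    (m M : S → ℝ) (hm : ∀ s, 0 ≤ m s) (hmM : ∀ s, m s < M s)
    (U : S → ℝ → ℝ)
    -- Assumption A1
    (hUmono : ∀ s, MonotoneOn (U s) (Set.Icc (m s) (M s)))
    (hUconc : ∀ s, StrictConcaveOn ℝ (Set.Icc (m s) (M s)) (U s))
    (hUdiff : ∀ s, ContDiffOn ℝ 1 (U s) (Set.Icc (m s) (M s)))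
    -- the domain D
    (D : Set ((S → ℝ) × (T → ℝ)))
    (hD : D = {p | (∀ t, 0 ≤ p.2 t) ∧
      (∀ s, p.1 s = ∑ t, if σ t = s then p.2 t else 0) ∧
      (∀ s, p.1 s ∈ Set.Icc (m s) (M s))})
    -- the Lagrangian
    (L : (S → ℝ) → (T → ℝ) → (E → ℝ) → ℝ)
    (hL : ∀ x y lam, L x y lam =
      ∑ s, U s (x s) + ∑ e, lam e * (c e - ∑ t, H e t * y t))
    -- the dual function
    (θ : (E → ℝ) → ℝ)
    (hθ : ∀ lam : E → ℝ, IsGreatest {v | ∃ p ∈ D, v = L p.1 p.2 lam} (θ lam))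
    -- the minimum tree cost γ(s, λ)
    (γ : S → (E → ℝ) → ℝ)
    (hγ : ∀ s lam, IsLeast {w | ∃ t, σ t = s ∧ w = ∑ e, H e t * lam e} (γ s lam))
    -- x_s†(w) : the unique maximizer of x ↦ U_s(x) - w·x over [m_s, M_s]
    (xdag : S → ℝ → ℝ)
    (hxdag : ∀ (s : S) (w : ℝ), xdag s w ∈ Set.Icc (m s) (M s) ∧
      (∀ z ∈ Set.Icc (m s) (M s), U s z - w * z ≤ U s (xdag s w) - w * xdag s w) ∧
      (∀ z ∈ Set.Icc (m s) (M s),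
        U s z - w * z = U s (xdag s w) - w * xdag s w → z = xdag s w))
    -- the restricted tree set T', containing at least one tree of every session
    (T' : Finset T) (hT' : ∀ s, ∃ t ∈ T', σ t = s)
    -- the domain D' of the restricted master problem
    (D' : Set ((S → ℝ) × (T → ℝ)))
    (hD' : D' = {p | p ∈ D ∧ ∀ t ∉ T', p.2 t = 0})
    -- the dual function of the RMP
    (θ' : (E → ℝ) → ℝ)
    (hθ' : ∀ lam : E → ℝ, IsGreatest {v | ∃ p ∈ D', v = L p.1 p.2 lam} (θ' lam))
    -- the local minimum tree cost
    (γ' : S → (E → ℝ) → ℝ)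
    (hγ' : ∀ s lam,
      IsLeast {w | ∃ t ∈ T', σ t = s ∧ w = ∑ e, H e t * lam e} (γ' s lam)) :
    ∀ lam : E → ℝ, (∀ e, 0 ≤ lam e) →
      θ lam = ∑ e, lam e * c e +
        ∑ s, (U s (xdag s (γ s lam)) - γ s lam * xdag s (γ s lam)) ∧
      θ lam - θ' lam =
        ∑ s, ((U s (xdag s (γ s lam)) - γ s lam * xdag s (γ s lam)) -
          (U s (xdag s (γ' s lam)) - γ' s lam * xdag s (γ' s lam))) :=
  dual_function_explicit_general σ H c m M hm U D hD L hL θ hθ γ hγ xdag hxdag T' D' hD' θ' hθ' γ'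
    hγ'
end

section
/- Under Assumptions A1 and A2, let (x̄, ȳ, λ̄) be an optimal primal–dual pair of the RMP, let ρ ≥ 1, and suppose for each session s: γ(s,λ̄) > 0, (1/ρ)·γ_ρ(s,λ̄) ≤ γ(s,λ̄) ≤ γ_ρ(s,λ̄), and γ_ρ(s,λ̄) = γ'(s,λ̄). Assume also x̄_s > m_s for all s (Assumption A3) and U_s(m_s) − m_s·U_s'(m_s) ≥ 0 for all s (Assumption A4). Then the RMP solution is a ρ-approximation of the MP: Σ_s U_s(x̄_s) ≤ Σ_s U_s(x_s*) ≤ ρ·Σ_s U_s(x̄_s). In particular, if ρ = 1 these inequalities hold with equality and x̄ is optimal to the MP. -/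
open Set

/-!
Route every session on its cheapest tree in `T'`. Together with `θ'(λ̄) = ∑ U(x̄)` and
complementary slackness this shows that `x̄` maximises the reduced objective
`∑ₛ (Uₛ(xₛ) - γ'ₛ xₛ)` over the box `∏ₛ [mₛ, Mₛ]`; comparing with `x = m`, concavity and A4
give `γ'ₛ x̄ₛ ≤ Uₛ(x̄ₛ)`. The ρ-approximate pricing gives `γ'ₛ ≤ ρ γₛ`, so any MP-feasible flow
pays at most `ρ ∑ₑ λ̄ₑ cₑ` at the prices `γ'`, whence
`∑ U(x*) ≤ ∑ U(x̄) + (ρ - 1) ∑ₑ λ̄ₑ cₑ ≤ ρ ∑ U(x̄)`.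
-/

theorem IsMaxOn.of_sum_pi {ι : Type*} [Fintype ι] {φ : ι → ℝ → ℝ}
    {K : ι → Set ℝ} {x₀ : ι → ℝ} (hx₀ : x₀ ∈ univ.pi K)
    (hmax : IsMaxOn (fun x => ∑ i, φ i (x i)) (univ.pi K) x₀) (i : ι) :
    IsMaxOn (φ i) (K i) (x₀ i) := by
  classical
  refine isMaxOn_iff.2 fun a ha => ?_
  have hmem : Function.update x₀ i a ∈ univ.pi K := by
    intro j _
    rcases eq_or_ne j i with rfl | hj
    · simpa using ha
    · simpa [hj] using hx₀ j trivial
  have h := isMaxOn_iff.1 hmax _ hmem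
  simp only [Function.apply_update φ x₀] at h
  rw [Finset.sum_update_of_mem (Finset.mem_univ i),
    Finset.sum_eq_add_sum_sdiff_singleton_of_mem (Finset.mem_univ i)] at h
  exact le_of_add_le_add_right h

theorem ConcaveOn.mul_le_of_sub_mul_le {f : ℝ → ℝ} {a b x γ : ℝ}
    (hf : ConcaveOn ℝ (Icc a b) f) (hfa : DifferentiableWithinAt ℝ f (Icc a b) a)
    (ha : 0 ≤ a) (hax : a < x) (hxb : x ≤ b)
    (htangent : 0 ≤ f a - a * derivWithin f (Icc a b) a)
    (hγ : f a - γ * a ≤ f x - γ * x) : γ * x ≤ f x := by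
  have hxa : 0 < x - a := sub_pos.2 hax
  have hslope := hf.slope_le_derivWithin (left_mem_Icc.2 (hax.le.trans hxb)) ⟨hax.le, hxb⟩
    hax hfa
  rw [slope_def_field, div_le_iff₀ hxa] at hslope
  have hγf' : γ ≤ derivWithin f (Icc a b) a := le_of_mul_le_mul_right (by linarith) hxa
  nlinarith [mul_le_mul_of_nonneg_left hγf' ha]

theorem mul_le_of_isMaxOn_sum_sub_mul {S : Type*} [Fintype S] {U : S → ℝ → ℝ}
    {m M x γ : S → ℝ} (hU : ∀ s, ConcaveOn ℝ (Icc (m s) (M s)) (U s))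
    (hUd : ∀ s, DifferentiableOn ℝ (U s) (Icc (m s) (M s))) (hm : ∀ s, 0 ≤ m s)
    (hmx : ∀ s, m s < x s) (hxM : ∀ s, x s ≤ M s)
    (htangent : ∀ s, 0 ≤ U s (m s) - m s * derivWithin (U s) (Icc (m s) (M s)) (m s))
    (hmax : IsMaxOn (fun y => ∑ s, (U s (y s) - γ s * y s))
      (univ.pi fun s => Icc (m s) (M s)) x) (s : S) :
    γ s * x s ≤ U s (x s) := by
  have hm_mem : m s ∈ Icc (m s) (M s) := left_mem_Icc.2 ((hmx s).le.trans (hxM s))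
  have hmax_s := hmax.of_sum_pi (φ := fun s a => U s a - γ s * a)
    (fun s _ => show x s ∈ Icc (m s) (M s) from ⟨(hmx s).le, hxM s⟩) s
  exact (hU s).mul_le_of_sub_mul_le (hUd s _ hm_mem) (hm s) (hmx s) (hxM s) (htangent s)
    (isMaxOn_iff.1 hmax_s _ hm_mem)

section Trees

variable {S T E : Type}

def treeCost [Fintype E] (H : E → T → ℝ) (lam : E → ℝ) (t : T) : ℝ := ∑ e, H e t * lam e

def sessionRate [Fintype T] [DecidableEq S] (σ : T → S) (y : T → ℝ) (s : S) : ℝ :=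
  ∑ t, if σ t = s then y t else 0

def routeOn [Fintype S] [DecidableEq T] (ts : S → T) (x : S → ℝ) (t : T) : ℝ :=
  ∑ s, if ts s = t then x s else 0

theorem sum_mul_sub_load_eq [Fintype T] [Fintype E] (H : E → T → ℝ) (c lam : E → ℝ)
    (y : T → ℝ) :
    ∑ e, lam e * (c e - ∑ t, H e t * y t) =
      ∑ e, lam e * c e - ∑ t, treeCost H lam t * y t := by
  simp only [treeCost, mul_sub, Finset.sum_sub_distrib, Finset.mul_sum, Finset.sum_mul]
  rw [Finset.sum_comm (f := fun e t => lam e * (H e t * y t))]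
  congr 1
  exact Finset.sum_congr rfl fun t _ => Finset.sum_congr rfl fun e _ => by ring

theorem sum_treeCost_mul_le [Fintype T] [Fintype E] {H : E → T → ℝ} {c lam : E → ℝ}
    {y : T → ℝ} (hlam : ∀ e, 0 ≤ lam e) (hcap : ∀ e, ∑ t, H e t * y t ≤ c e) :
    ∑ t, treeCost H lam t * y t ≤ ∑ e, lam e * c e := by
  have := Finset.sum_nonneg fun e (_ : e ∈ Finset.univ) =>
    mul_nonneg (hlam e) (sub_nonneg.2 (hcap e))
  rw [sum_mul_sub_load_eq] at this
  linarith

theorem sum_mul_sessionRate [Fintype S] [Fintype T] [DecidableEq S] (σ : T → S) (g : S → ℝ)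
    (y : T → ℝ) : ∑ s, g s * sessionRate σ y s = ∑ t, g (σ t) * y t := by
  simp only [sessionRate, Finset.mul_sum, mul_ite, mul_zero]
  rw [Finset.sum_comm]
  simp

theorem sum_mul_le_mul_sum_mul_of_le_treeCost [Fintype S] [Fintype T] [Fintype E] [DecidableEq S]
    {σ : T → S} {H : E → T → ℝ} {c lam : E → ℝ} {g x : S → ℝ} {y : T → ℝ} {ρ : ℝ}
    (hρ : 0 ≤ ρ) (hx : ∀ s, x s = sessionRate σ y s) (hy : ∀ t, 0 ≤ y t)
    (hlam : ∀ e, 0 ≤ lam e) (hcap : ∀ e, ∑ t, H e t * y t ≤ c e)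
    (hg : ∀ t, y t ≠ 0 → g (σ t) ≤ ρ * treeCost H lam t) :
    ∑ s, g s * x s ≤ ρ * ∑ e, lam e * c e := by
  rw [show x = sessionRate σ y from funext hx, sum_mul_sessionRate]
  calc ∑ t, g (σ t) * y t ≤ ∑ t, ρ * treeCost H lam t * y t := by
        refine Finset.sum_le_sum fun t _ => ?_
        rcases eq_or_ne (y t) 0 with h | h
        · simp [h]
        · exact mul_le_mul_of_nonneg_right (hg t h) (hy t)
    _ = ρ * ∑ t, treeCost H lam t * y t := by simp only [mul_assoc, ← Finset.mul_sum]
    _ ≤ ρ * ∑ e, lam e * c e := mul_le_mul_of_nonneg_left (sum_treeCost_mul_le hlam hcap) hρ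

theorem sessionRate_routeOn [Fintype S] [Fintype T] [DecidableEq S] [DecidableEq T]
    {σ : T → S} {ts : S → T} (hts : ∀ s, σ (ts s) = s) (x : S → ℝ) :
    sessionRate σ (routeOn ts x) = x := by
  ext s₀
  rw [sessionRate, ← Finset.sum_filter]
  simp only [routeOn]
  rw [Finset.sum_comm]
  simp [hts]

theorem sum_mul_routeOn [Fintype S] [Fintype T] [DecidableEq T] (ts : S → T) (f : T → ℝ)
    (x : S → ℝ) : ∑ t, f t * routeOn ts x t = ∑ s, f (ts s) * x s := by
  simp only [routeOn, Finset.mul_sum, mul_ite, mul_zero]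
  rw [Finset.sum_comm]
  simp

theorem routeOn_nonneg [Fintype S] [DecidableEq T] (ts : S → T) {x : S → ℝ}
    (hx : ∀ s, 0 ≤ x s) (t : T) : 0 ≤ routeOn ts x t :=
  Finset.sum_nonneg fun s _ => by split <;> simp [hx s]

theorem routeOn_eq_zero_of_notMem [Fintype S] [DecidableEq T] {T' : Finset T} {ts : S → T}
    (hts : ∀ s, ts s ∈ T') (x : S → ℝ) {t : T} (ht : t ∉ T') : routeOn ts x t = 0 :=
  Finset.sum_eq_zero fun s _ => if_neg fun h : ts s = t => ht (h ▸ hts s)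

theorem sum_sub_mul_add_le_of_lagrangian_le [Fintype S] [Fintype T] [Fintype E] [DecidableEq S]
    {σ : T → S} {H : E → T → ℝ} {c lam : E → ℝ} {U : S → ℝ → ℝ} {K : S → Set ℝ}
    {T' : Finset T} {γ' : S → ℝ} {V : ℝ}
    (hγ' : ∀ s, IsLeast {w | ∃ t ∈ T', σ t = s ∧ w = treeCost H lam t} (γ' s))
    (hub : ∀ y : T → ℝ, (∀ t, 0 ≤ y t) → (∀ t ∉ T', y t = 0) →
      (∀ s, sessionRate σ y s ∈ K s) →
      ∑ s, U s (sessionRate σ y s) + ∑ e, lam e * (c e - ∑ t, H e t * y t) ≤ V)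
    {x : S → ℝ} (hx₀ : ∀ s, 0 ≤ x s) (hxK : ∀ s, x s ∈ K s) :
    ∑ s, (U s (x s) - γ' s * x s) + ∑ e, lam e * c e ≤ V := by
  classical
  choose ts hts hσts hcost using fun s => (hγ' s).1
  have hrate := sessionRate_routeOn hσts x
  have h := hub (routeOn ts x) (routeOn_nonneg ts hx₀)
    (fun t => routeOn_eq_zero_of_notMem hts x) (by rwa [hrate])
  rw [hrate, sum_mul_sub_load_eq, sum_mul_routeOn] at h
  simp only [← hcost] at h
  rw [Finset.sum_sub_distrib]
  linarith

end Trees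

theorem rho_approximation_to_mp_general
    {S T E : Type} [Fintype S] [Fintype T] [Fintype E]
    [DecidableEq S]
    (σ : T → S)
    (H : E → T → ℝ)
    (c : E → ℝ)
    (m M : S → ℝ) (hm : ∀ s, 0 ≤ m s)
    (U : S → ℝ → ℝ)
    -- Assumption A1
    (hUconc : ∀ s, StrictConcaveOn ℝ (Set.Icc (m s) (M s)) (U s))
    (hUdiff : ∀ s, ContDiffOn ℝ 1 (U s) (Set.Icc (m s) (M s)))
    -- the domain D
    (D : Set ((S → ℝ) × (T → ℝ)))
    (hD : D = {p | (∀ t, 0 ≤ p.2 t) ∧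
      (∀ s, p.1 s = ∑ t, if σ t = s then p.2 t else 0) ∧
      (∀ s, p.1 s ∈ Set.Icc (m s) (M s))})
    -- the Lagrangian
    (L : (S → ℝ) → (T → ℝ) → (E → ℝ) → ℝ)
    (hL : ∀ x y lam, L x y lam =
      ∑ s, U s (x s) + ∑ e, lam e * (c e - ∑ t, H e t * y t))
    -- the optimal value of the master problem
    (fStar : ℝ)
    (hfStar : IsGreatest {v | ∃ p ∈ D, (∀ e, ∑ t, H e t * p.2 t ≤ c e) ∧
      v = ∑ s, U s (p.1 s)} fStar)
    -- the restricted tree set T', containing at least one tree of every session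
    (T' : Finset T)
    -- the domain D' of the restricted master problem
    (D' : Set ((S → ℝ) × (T → ℝ)))
    (hD' : D' = {p | p ∈ D ∧ ∀ t ∉ T', p.2 t = 0})
    -- the dual function of the RMP
    (θ' : (E → ℝ) → ℝ)
    (hθ' : ∀ lam : E → ℝ, IsGreatest {v | ∃ p ∈ D', v = L p.1 p.2 lam} (θ' lam))
    -- (x̄, ȳ, λ̄) is an optimal primal–dual pair of the RMP
    (xbar : S → ℝ) (ybar : T → ℝ) (lambar : E → ℝ)
    (hlambar_nonneg : ∀ e, 0 ≤ lambar e)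
    (hbar_feas : (xbar, ybar) ∈ D' ∧ ∀ e, ∑ t, H e t * ybar t ≤ c e)
    (hduality : ∑ s, U s (xbar s) = θ' lambar)
    -- the global and local minimum tree costs under λ̄
    (γbar γ'bar : S → ℝ)
    (hγbar : ∀ s, IsLeast {w | ∃ t, σ t = s ∧ w = ∑ e, H e t * lambar e} (γbar s))
    (hγ'bar : ∀ s,
      IsLeast {w | ∃ t ∈ T', σ t = s ∧ w = ∑ e, H e t * lambar e} (γ'bar s))
    -- the approximation ratio ρ and the ρ-approximate tree costs at λ̄
    (ρ : ℝ) (hρ : 1 ≤ ρ) (γρ : S → ℝ)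
    (hγρ : ∀ s, (1 / ρ) * γρ s ≤ γbar s ∧ γbar s ≤ γρ s)
    -- the condition satisfied at convergence of column generation
    (hconv : ∀ s, γρ s = γ'bar s)
    -- Assumption A3
    (hA3 : ∀ s, m s < xbar s)
    -- Assumption A4
    (hA4 : ∀ s, 0 ≤ U s (m s) -
      m s * derivWithin (U s) (Set.Icc (m s) (M s)) (m s))
    -- x* is the unique optimal session-rate vector of the MP
    (xstar : S → ℝ)
    (hxstar_opt : ∃ ystar : T → ℝ, (xstar, ystar) ∈ D ∧
      (∀ e, ∑ t, H e t * ystar t ≤ c e) ∧ ∑ s, U s (xstar s) = fStar) :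
    ∑ s, U s (xbar s) ≤ ∑ s, U s (xstar s) ∧
    ∑ s, U s (xstar s) ≤ ρ * ∑ s, U s (xbar s) ∧
    (ρ = 1 → ∑ s, U s (xbar s) = ∑ s, U s (xstar s)) := by
  subst hD hD'
  obtain ⟨⟨⟨hybar, hxbar, hxbar_mem⟩, hybar_supp⟩, hybar_cap⟩ := hbar_feas
  obtain ⟨ystar, ⟨hystar, hxstar, hxstar_mem⟩, hystar_cap, rfl⟩ := hxstar_opt
  have hρ₀ : 0 < ρ := zero_lt_one.trans_le hρ
  have hreduced : ∀ x : S → ℝ, (∀ s, x s ∈ Icc (m s) (M s)) →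
      ∑ s, (U s (x s) - γ'bar s * x s) + ∑ e, lambar e * c e ≤ ∑ s, U s (xbar s) :=
    fun x hx => sum_sub_mul_add_le_of_lagrangian_le hγ'bar
      (fun y hy hsupp hmem => hduality ▸ hL _ _ _ ▸
        (hθ' lambar).2 ⟨(sessionRate σ y, y), ⟨⟨hy, fun _ => rfl, hmem⟩, hsupp⟩, rfl⟩)
      (fun s => (hm s).trans (hx s).1) hx
  have hslack : ∑ s, γ'bar s * xbar s ≤ 1 * ∑ e, lambar e * c e :=
    sum_mul_le_mul_sum_mul_of_le_treeCost zero_le_one hxbar hybar hlambar_nonneg hybar_cap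
      fun t ht => (one_mul (treeCost H lambar t)).symm ▸
        (hγ'bar (σ t)).2 ⟨t, by_contra (ht ∘ hybar_supp t), rfl, rfl⟩
  have hpay : ∑ s, γ'bar s * xstar s ≤ ρ * ∑ e, lambar e * c e :=
    sum_mul_le_mul_sum_mul_of_le_treeCost hρ₀.le hxstar hystar hlambar_nonneg hystar_cap
      fun t _ => by
        have hγ' := (hγρ (σ t)).1
        rw [one_div, inv_mul_le_iff₀ hρ₀, hconv] at hγ'
        exact hγ'.trans (mul_le_mul_of_nonneg_left ((hγbar (σ t)).2 ⟨t, rfl, rfl⟩) hρ₀.le)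
  have hprofit : ∀ s, γ'bar s * xbar s ≤ U s (xbar s) :=
    mul_le_of_isMaxOn_sum_sub_mul (fun s => (hUconc s).concaveOn)
      (fun s => (hUdiff s).differentiableOn one_ne_zero) hm hA3 (fun s => (hxbar_mem s).2) hA4 <|
      isMaxOn_iff.2 fun x hx => by
        have := hreduced x fun s => hx s trivial
        rw [Finset.sum_sub_distrib (f := fun s => U s (xbar s))]
        linarith
  have hopt : ∑ s, U s (xbar s) ≤ ∑ s, U s (xstar s) :=
    hfStar.2 ⟨_, ⟨hybar, hxbar, hxbar_mem⟩, hybar_cap, rfl⟩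
  have happrox : ∑ s, U s (xstar s) ≤ ρ * ∑ s, U s (xbar s) := by
    have hstar := hreduced xstar hxstar_mem
    have hbar := hreduced xbar hxbar_mem
    have hprofit_sum := Finset.sum_le_sum fun s (_ : s ∈ Finset.univ) => hprofit s
    rw [Finset.sum_sub_distrib] at hstar hbar
    nlinarith
  exact ⟨hopt, happrox, fun h => le_antisymm hopt (by simpa [h] using happrox)⟩

/-- the RMP solution obtained by column generation with ρ-approximate
tree scheduling is a ρ-approximation of the MP; for ρ = 1 it is exactly optimal. -/
theorem rho_approximation_to_mp
    {S T E : Type} [Fintype S] [Fintype T] [Fintype E]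
    [Nonempty S] [Nonempty T] [Nonempty E] [DecidableEq S] [DecidableEq T]
    (σ : T → S) (hσ : Function.Surjective σ)
    (H : E → T → ℝ) (hH : ∀ e t, H e t = 0 ∨ H e t = 1)
    (c : E → ℝ) (hc : ∀ e, 0 < c e)
    (m M : S → ℝ) (hm : ∀ s, 0 ≤ m s) (hmM : ∀ s, m s < M s)
    (U : S → ℝ → ℝ)
    -- Assumption A1
    (hUmono : ∀ s, MonotoneOn (U s) (Set.Icc (m s) (M s)))
    (hUconc : ∀ s, StrictConcaveOn ℝ (Set.Icc (m s) (M s)) (U s))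
    (hUdiff : ∀ s, ContDiffOn ℝ 1 (U s) (Set.Icc (m s) (M s)))
    -- the domain D
    (D : Set ((S → ℝ) × (T → ℝ)))
    (hD : D = {p | (∀ t, 0 ≤ p.2 t) ∧
      (∀ s, p.1 s = ∑ t, if σ t = s then p.2 t else 0) ∧
      (∀ s, p.1 s ∈ Set.Icc (m s) (M s))})
    -- the Lagrangian
    (L : (S → ℝ) → (T → ℝ) → (E → ℝ) → ℝ)
    (hL : ∀ x y lam, L x y lam =
      ∑ s, U s (x s) + ∑ e, lam e * (c e - ∑ t, H e t * y t))
    -- the optimal value of the master problem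
    (fStar : ℝ)
    (hfStar : IsGreatest {v | ∃ p ∈ D, (∀ e, ∑ t, H e t * p.2 t ≤ c e) ∧
      v = ∑ s, U s (p.1 s)} fStar)
    -- the dual function
    (θ : (E → ℝ) → ℝ)
    (hθ : ∀ lam : E → ℝ, IsGreatest {v | ∃ p ∈ D, v = L p.1 p.2 lam} (θ lam))
    -- Assumption A2 (Slater)
    (hslater : ∃ p ∈ D, ∀ e, ∑ t, H e t * p.2 t < c e)
    -- the restricted tree set T', containing at least one tree of every session
    (T' : Finset T) (hT' : ∀ s, ∃ t ∈ T', σ t = s)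
    -- the domain D' of the restricted master problem
    (D' : Set ((S → ℝ) × (T → ℝ)))
    (hD' : D' = {p | p ∈ D ∧ ∀ t ∉ T', p.2 t = 0})
    -- the dual function of the RMP
    (θ' : (E → ℝ) → ℝ)
    (hθ' : ∀ lam : E → ℝ, IsGreatest {v | ∃ p ∈ D', v = L p.1 p.2 lam} (θ' lam))
    -- Assumption A2 (Slater) for the RMP
    (hslater' : ∃ p ∈ D', ∀ e, ∑ t, H e t * p.2 t < c e)
    -- (x̄, ȳ, λ̄) is an optimal primal–dual pair of the RMP
    (xbar : S → ℝ) (ybar : T → ℝ) (lambar : E → ℝ)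
    (hlambar_nonneg : ∀ e, 0 ≤ lambar e)
    (hlambar_min : ∀ μ : E → ℝ, (∀ e, 0 ≤ μ e) → θ' lambar ≤ θ' μ)
    (hbar_feas : (xbar, ybar) ∈ D' ∧ ∀ e, ∑ t, H e t * ybar t ≤ c e)
    (hbar_opt : ∀ p ∈ D', (∀ e, ∑ t, H e t * p.2 t ≤ c e) →
      ∑ s, U s (p.1 s) ≤ ∑ s, U s (xbar s))
    (hduality : ∑ s, U s (xbar s) = θ' lambar)
    -- the global and local minimum tree costs under λ̄
    (γbar γ'bar : S → ℝ)
    (hγbar : ∀ s, IsLeast {w | ∃ t, σ t = s ∧ w = ∑ e, H e t * lambar e} (γbar s))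
    (hγ'bar : ∀ s,
      IsLeast {w | ∃ t ∈ T', σ t = s ∧ w = ∑ e, H e t * lambar e} (γ'bar s))
    -- the approximation ratio ρ and the ρ-approximate tree costs at λ̄
    (ρ : ℝ) (hρ : 1 ≤ ρ) (γρ : S → ℝ)
    (hγpos : ∀ s, 0 < γbar s)
    (hγρ : ∀ s, (1 / ρ) * γρ s ≤ γbar s ∧ γbar s ≤ γρ s)
    -- the condition satisfied at convergence of column generation
    (hconv : ∀ s, γρ s = γ'bar s)
    -- Assumption A3
    (hA3 : ∀ s, m s < xbar s)
    -- Assumption A4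
    (hA4 : ∀ s, 0 ≤ U s (m s) -
      m s * derivWithin (U s) (Set.Icc (m s) (M s)) (m s))
    -- x* is the unique optimal session-rate vector of the MP
    (xstar : S → ℝ)
    (hxstar_opt : ∃ ystar : T → ℝ, (xstar, ystar) ∈ D ∧
      (∀ e, ∑ t, H e t * ystar t ≤ c e) ∧ ∑ s, U s (xstar s) = fStar)
    (hxstar_uniq : ∀ p ∈ D, (∀ e, ∑ t, H e t * p.2 t ≤ c e) →
      ∑ s, U s (p.1 s) = fStar → p.1 = xstar) :
    ∑ s, U s (xbar s) ≤ ∑ s, U s (xstar s) ∧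
    ∑ s, U s (xstar s) ≤ ρ * ∑ s, U s (xbar s) ∧
    (ρ = 1 → ∑ s, U s (xbar s) = ∑ s, U s (xstar s)) :=
  rho_approximation_to_mp_general σ H c m M hm U hUconc hUdiff D hD L hL fStar hfStar T' D' hD' θ'
    hθ' xbar ybar lambar hlambar_nonneg hbar_feas hduality γbar γ'bar hγbar hγ'bar ρ hρ γρ hγρ hconv
    hA3 hA4 xstar hxstar_opt
end

section
/- Let 0 ≤ m < M, let U : ℝ → ℝ be non-decreasing, strictly concave and continuously differentiable on [m, M], let I be a nonempty finite set with costs w_t ≥ 0 for t ∈ I, let γ = min_{t∈I} w_t be attained at some t* ∈ I, and let x† be the unique maximizer of x ↦ U(x) − γ·x over [m, M]. Then the vector y* ∈ ℝ^I with y*_{t*} = x† and y*_t = 0 for t ≠ t* maximizes g(y) = U(Σ_{t∈I} y_t) − Σ_{t∈I} y_t·w_t over the set {y ∈ ℝ^I : y_t ≥ 0 ∀t, m ≤ Σ_{t∈I} y_t ≤ M}. -/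
theorem sum_mul_le_sum_mul_of_le {ι R : Type*} [Semiring R] [PartialOrder R] [IsOrderedRing R]
    (s : Finset ι) {y w : ι → R} {c : R} (hy : ∀ t ∈ s, 0 ≤ y t) (hc : ∀ t ∈ s, c ≤ w t) :
    (∑ t ∈ s, y t) * c ≤ ∑ t ∈ s, y t * w t := by
  rw [Finset.sum_mul]
  exact Finset.sum_le_sum fun t ht => mul_le_mul_of_nonneg_left (hc t ht) (hy t ht)

theorem per_session_subproblem_general
    {I : Type} [Fintype I] [DecidableEq I]
    (m M : ℝ) (U : ℝ → ℝ)
    -- the tree costs, and a minimum-cost tree t*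
    (w : I → ℝ)
    (tstar : I) (htstar : ∀ t, w tstar ≤ w t)
    -- x† : the unique maximizer of x ↦ U(x) - γ·x over [m, M], where γ = w t*
    (xd : ℝ)
    (hxd : xd ∈ Set.Icc m M ∧
      (∀ z ∈ Set.Icc m M, U z - w tstar * z ≤ U xd - w tstar * xd) ∧
      (∀ z ∈ Set.Icc m M, U z - w tstar * z = U xd - w tstar * xd → z = xd)) :
    ∀ y : I → ℝ, (∀ t, 0 ≤ y t) → m ≤ ∑ t, y t → ∑ t, y t ≤ M →
      U (∑ t, y t) - ∑ t, y t * w t ≤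
        U (∑ t, (if t = tstar then xd else 0)) -
          ∑ t, (if t = tstar then xd else 0) * w t := by
  intro y hy hm hM
  have hcost : (∑ t, y t) * w tstar ≤ ∑ t, y t * w t :=
    sum_mul_le_sum_mul_of_le _ (fun t _ => hy t) (fun t _ => htstar t)
  have hopt := hxd.2.1 (∑ t, y t) ⟨hm, hM⟩
  simp only [ite_mul, zero_mul, Finset.sum_ite_eq', Finset.mem_univ, if_true]
  linarith

/-- the per-session Lagrangian subproblem is solved by putting the whole
rate x† on a minimum-cost tree t*. -/
theorem per_session_subproblem
    {I : Type} [Fintype I] [Nonempty I] [DecidableEq I]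
    (m M : ℝ) (hm : 0 ≤ m) (hmM : m < M) (U : ℝ → ℝ)
    (hUmono : MonotoneOn U (Set.Icc m M))
    (hUconc : StrictConcaveOn ℝ (Set.Icc m M) U)
    (hUdiff : ContDiffOn ℝ 1 U (Set.Icc m M))
    -- the tree costs, and a minimum-cost tree t*
    (w : I → ℝ) (hw : ∀ t, 0 ≤ w t)
    (tstar : I) (htstar : ∀ t, w tstar ≤ w t)
    -- x† : the unique maximizer of x ↦ U(x) - γ·x over [m, M], where γ = w t*
    (xd : ℝ)
    (hxd : xd ∈ Set.Icc m M ∧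
      (∀ z ∈ Set.Icc m M, U z - w tstar * z ≤ U xd - w tstar * xd) ∧
      (∀ z ∈ Set.Icc m M, U z - w tstar * z = U xd - w tstar * xd → z = xd)) :
    ∀ y : I → ℝ, (∀ t, 0 ≤ y t) → m ≤ ∑ t, y t → ∑ t, y t ≤ M →
      U (∑ t, y t) - ∑ t, y t * w t ≤
        U (∑ t, (if t = tstar then xd else 0)) -
          ∑ t, (if t = tstar then xd else 0) * w t :=
  per_session_subproblem_general m M U w tstar htstar xd hxd
end
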